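/- For every real number r, the double integral ∫_{-π/2}^{π/2} ∫_{0}^{arctanh(tanh(r/2)·cos θ)} cosh(t) dt dθ equals r. -/

import Mathlib

open Real intervalIntegral

/-- The inverse hyperbolic tangent. -/
noncomputable def artanh (x : ℝ) : ℝ := Real.log ((1 + x) / (1 - x)) / 2

/-! With `u = tanh (r / 2) * cos θ`, the inner integral is `sinh (artanh u) = u / √(1 - u ^ 2)`,
which simplifies to `sinh (r / 2) * cos θ / √(1 + (sinh (r / 2) * sin θ) ^ 2)`. This is the
derivative of `arsinh (sinh (r / 2) * sin θ)`, so the outer integral is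
`2 * arsinh (sinh (r / 2)) = r`. -/

theorem integral_cosh (a b : ℝ) : ∫ x in a..b, cosh x = sinh b - sinh a :=
  integral_eq_sub_of_hasDerivAt (fun x _ => hasDerivAt_sinh x)
    (continuous_cosh.intervalIntegrable _ _)

theorem artanh_eq_real_artanh {x : ℝ} (hx : x ∈ Set.Icc (-1) 1) :
    _root_.artanh x = Real.artanh x := by
  rw [Real.artanh_eq_half_log hx, _root_.artanh]
  ring

theorem one_sub_sq_tanh_mul_cos (c θ : ℝ) :
    1 - (tanh c * cos θ) ^ 2 = (1 + (sinh c * sin θ) ^ 2) / cosh c ^ 2 := by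
  rw [tanh_eq_sinh_div_cosh, eq_div_iff (pow_ne_zero 2 (cosh_pos c).ne')]
  field_simp
  linear_combination (-sinh c ^ 2) * sin_sq_add_cos_sq θ + cosh_sq c

theorem sinh_artanh_tanh_mul_cos (c θ : ℝ) :
    sinh (_root_.artanh (tanh c * cos θ)) = sinh c * cos θ / √(1 + (sinh c * sin θ) ^ 2) := by
  have hmem : tanh c * cos θ ∈ Set.Ioo (-1) 1 := by
    rw [Set.mem_Ioo, ← abs_lt, abs_mul]
    exact (mul_le_of_le_one_right (abs_nonneg _) (abs_cos_le_one θ)).trans_lt (abs_tanh_lt_one c)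
  rw [artanh_eq_real_artanh (Set.Ioo_subset_Icc_self hmem), Real.sinh_artanh hmem,
    one_sub_sq_tanh_mul_cos, sqrt_div' _ (sq_nonneg _), sqrt_sq (cosh_pos c).le,
    tanh_eq_sinh_div_cosh]
  have : 0 < √(1 + (sinh c * sin θ) ^ 2) := by positivity
  field_simp [(cosh_pos c).ne']

theorem integral_mul_cos_div_sqrt_one_add_sq_mul_sin (a u v : ℝ) :
    ∫ θ in u..v, a * cos θ / √(1 + (a * sin θ) ^ 2) = arsinh (a * sin v) - arsinh (a * sin u) := by
  have hcont : Continuous fun θ => a * cos θ / √(1 + (a * sin θ) ^ 2) :=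
    (continuous_const.mul continuous_cos).div (by fun_prop) fun θ => by positivity
  refine integral_eq_sub_of_hasDerivAt (f := fun θ => arsinh (a * sin θ)) (fun θ _ => ?_)
    (hcont.intervalIntegrable _ _)
  simpa only [smul_eq_mul, div_eq_inv_mul] using ((hasDerivAt_sin θ).const_mul a).arsinh

theorem integral_kinematic_measure_segment (r : ℝ) :
    ∫ θ in (-(π / 2))..(π / 2),
      ∫ t in (0 : ℝ)..(_root_.artanh (Real.tanh (r / 2) * Real.cos θ)), Real.cosh t = r := by
  simp_rw [integral_cosh, sinh_zero, sub_zero, sinh_artanh_tanh_mul_cos,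
    integral_mul_cos_div_sqrt_one_add_sq_mul_sin, sin_neg, sin_pi_div_two, mul_neg, mul_one,
    arsinh_neg, arsinh_sinh]
  ring
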